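/- Let X be a real random variable with E[X] = 0 and E[|X|³] < ∞, let σ > 0, ε > 0 and u ∈ ℝ. Then | E[Ψ'((u − εX)/σ)] − Ψ'(u/σ) − (ε² E[X²]/(2σ²)) · (2π)^{-1/2} (1 − (u/σ)²) e^{-u²/(2σ²)} | ≤ ε³ E[|X|³]/(2 σ³ √(2π)), where (2π)^{-1/2}(1 − x²)e^{-x²/2} = Ψ'''(x) = Ψ'(x)(x² − 1) is the third derivative of the Gaussian tail function. -/

import Mathlib

open Real

lemma cubic_le_exp {x : ℝ} (hx : 0 ≤ x) : 1 + x + x^2/2 + x^3/6 ≤ Real.exp x := by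
  have := Real.sum_le_exp_of_nonneg hx 4
  simp [Finset.sum_range_succ, Nat.factorial] at this
  norm_num at this ⊢
  linarith

lemma cubic_gauss_bound (y : ℝ) : |y^3 - 3*y| * Real.exp (-y^2/2) ≤ 3 := by
  have hsq : ((y^3 - 3*y) * Real.exp (-y^2/2))^2 ≤ 9 := by
    have h1 : (Real.exp (-y^2/2))^2 = Real.exp (-(y^2)) := by
      rw [← Real.exp_nat_mul]; ring_nf
    have h2 : Real.exp (-(y^2)) = (Real.exp (y^2))⁻¹ := by
      rw [Real.exp_neg]
    have h3 : 1 + y^2 + (y^2)^2/2 + (y^2)^3/6 ≤ Real.exp (y^2) := cubic_le_exp (sq_nonneg y)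
    have hpos : (0:ℝ) < Real.exp (y^2) := Real.exp_pos _
    rw [mul_pow, h1, h2, inv_eq_one_div, mul_comm, div_mul_eq_mul_div, div_le_iff₀ hpos, one_mul]
    nlinarith [sq_nonneg y, sq_nonneg (y^2)]
  have habs : |y^3 - 3*y| * Real.exp (-y^2/2) = |(y^3 - 3*y) * Real.exp (-y^2/2)| := by
    rw [abs_mul, abs_of_pos (Real.exp_pos _)]
  rw [habs]
  nlinarith [abs_nonneg ((y^3 - 3*y) * Real.exp (-y^2/2)), sq_abs ((y^3 - 3*y) * Real.exp (-y^2/2))]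

lemma mono_aux {ψ ψ' : ℝ → ℝ} (hd : ∀ t, HasDerivAt ψ (ψ' t) t) {h : ℝ} (hh : 0 ≤ h)
    (hpos : ∀ t ∈ Set.Icc (0:ℝ) h, 0 ≤ ψ' t) : ψ 0 ≤ ψ h := by
  have hm : MonotoneOn ψ (Set.Icc 0 h) := by
    apply monotoneOn_of_deriv_nonneg (convex_Icc 0 h)
    · exact fun x _ => (hd x).continuousAt.continuousWithinAt
    · exact fun x hx => ((hd x).differentiableAt).differentiableWithinAt
    · intro x hx
      rw [(hd x).deriv]
      exact hpos x (interior_subset hx)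
  exact hm (Set.left_mem_Icc.2 hh) (Set.right_mem_Icc.2 hh) hh

lemma bound_of_deriv_bound {g g' B B' : ℝ → ℝ}
    (hg : ∀ t, HasDerivAt g (g' t) t) (hg0 : g 0 = 0)
    (hB : ∀ t, HasDerivAt B (B' t) t) (hB0 : B 0 = 0)
    {h : ℝ} (hh : 0 ≤ h) (hle : ∀ t ∈ Set.Icc (0:ℝ) h, |g' t| ≤ B' t) :
    |g h| ≤ B h := by
  rw [abs_le]
  constructor
  · have := mono_aux (ψ := fun t => B t + g t) (ψ' := fun t => B' t + g' t)
      (fun t => (hB t).add (hg t)) hh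
      (fun t ht => by have := abs_le.1 (hle t ht); linarith)
    simp only [hg0, hB0, add_zero] at this; linarith
  · have := mono_aux (ψ := fun t => B t - g t) (ψ' := fun t => B' t - g' t)
      (fun t => (hB t).sub (hg t)) hh
      (fun t ht => by have := abs_le.1 (hle t ht); linarith)
    simp only [hg0, hB0, sub_zero] at this; linarith

lemma taylor2_nonneg {f f' f'' f''' : ℝ → ℝ}
    (h0 : ∀ x, HasDerivAt f (f' x) x) (h1 : ∀ x, HasDerivAt f' (f'' x) x)
    (h2 : ∀ x, HasDerivAt f'' (f''' x) x) {M : ℝ} (hM : ∀ x, |f''' x| ≤ M)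
    (a : ℝ) {h : ℝ} (hh : 0 ≤ h) :
    |f (a+h) - f a - h * f' a - h^2/2 * f'' a| ≤ M * h^3 / 6 := by
  have hc2 : ∀ s : ℝ, HasDerivAt (fun s : ℝ => f'' (a+s)) (f''' (a+s)) s := fun s => by
    exact ((h2 (a+s)).comp s ((hasDerivAt_id s).const_add a)).congr_deriv (by simp)
  have hc1 : ∀ s : ℝ, HasDerivAt (fun s : ℝ => f' (a+s)) (f'' (a+s)) s := fun s => by
    exact ((h1 (a+s)).comp s ((hasDerivAt_id s).const_add a)).congr_deriv (by simp)
  have hc0 : ∀ s : ℝ, HasDerivAt (fun s : ℝ => f (a+s)) (f' (a+s)) s := fun s => by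
    exact ((h0 (a+s)).comp s ((hasDerivAt_id s).const_add a)).congr_deriv (by simp)
  have stepA : ∀ t : ℝ, 0 ≤ t → |f'' (a+t) - f'' a| ≤ M * t := by
    intro t ht
    apply bound_of_deriv_bound (g' := fun s => f''' (a+s)) (B' := fun _ => M)
      (fun s => (hc2 s).sub_const (f'' a)) (by simp)
      (fun s => by simpa using (hasDerivAt_id s).const_mul M) (by simp) ht
    exact fun s _ => hM (a+s)
  have stepB : ∀ t : ℝ, 0 ≤ t → |f' (a+t) - f' a - f'' a * t| ≤ M * t^2 / 2 := by
    intro t ht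
    apply bound_of_deriv_bound (g := fun s : ℝ => f' (a+s) - f' a - f'' a * s)
      (g' := fun s => f'' (a+s) - f'' a) (B := fun s => M * s^2/2) (B' := fun s => M * s)
    · intro s
      have hb : HasDerivAt (fun s : ℝ => f'' a * s) (f'' a) s := by
        simpa using (hasDerivAt_id s).const_mul (f'' a)
      exact ((hc1 s).sub_const (f' a)).sub hb
    · simp
    · intro s
      have := ((hasDerivAt_pow 2 s).const_mul M).div_const 2
      refine this.congr_deriv ?_
      simp; ring
    · simp
    · exact ht
    · exact fun s hs => stepA s hs.1
  have key : |f (a+h) - f a - f' a * h - f'' a * (h^2/2)| ≤ M * h^3 / 6 := by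
    apply bound_of_deriv_bound (g := fun s : ℝ => f (a+s) - f a - f' a * s - f'' a * (s^2/2))
      (g' := fun s => f' (a+s) - f' a - f'' a * s) (B := fun s => M * s^3/6)
      (B' := fun s => M * s^2/2)
    · intro s
      have hb : HasDerivAt (fun s : ℝ => f' a * s) (f' a) s := by
        simpa using (hasDerivAt_id s).const_mul (f' a)
      have hb2 : HasDerivAt (fun s : ℝ => f'' a * (s^2/2)) (f'' a * s) s := by
        have := ((hasDerivAt_pow 2 s).div_const 2).const_mul (f'' a)
        refine this.congr_deriv ?_
        simp
      exact (((hc0 s).sub_const (f a)).sub hb).sub hb2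
    · simp
    · intro s
      have := ((hasDerivAt_pow 3 s).const_mul M).div_const 6
      refine this.congr_deriv ?_
      simp; ring
    · simp
    · exact hh
    · exact fun s hs => stepB s hs.1
  calc |f (a+h) - f a - h * f' a - h^2/2 * f'' a|
      = |f (a+h) - f a - f' a * h - f'' a * (h^2/2)| := by ring_nf
    _ ≤ M * h^3 / 6 := key

lemma taylor2_bound {f f' f'' f''' : ℝ → ℝ}
    (h0 : ∀ x, HasDerivAt f (f' x) x) (h1 : ∀ x, HasDerivAt f' (f'' x) x)
    (h2 : ∀ x, HasDerivAt f'' (f''' x) x) {M : ℝ} (hM : ∀ x, |f''' x| ≤ M)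
    (a h : ℝ) :
    |f (a+h) - f a - h * f' a - h^2/2 * f'' a| ≤ M * |h|^3 / 6 := by
  rcases le_or_gt 0 h with hh | hh
  · rw [abs_of_nonneg hh]
    exact taylor2_nonneg h0 h1 h2 hM a hh
  · have h0' : ∀ x, HasDerivAt (fun x : ℝ => f (-x)) (-f' (-x)) x := fun x => by
      exact ((h0 (-x)).comp x (hasDerivAt_neg x)).congr_deriv (by simp)
    have h1' : ∀ x, HasDerivAt (fun x : ℝ => -f' (-x)) (f'' (-x)) x := fun x => by
      exact ((h1 (-x)).comp x (hasDerivAt_neg x)).neg.congr_deriv (by simp)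
    have h2' : ∀ x, HasDerivAt (fun x : ℝ => f'' (-x)) (-f''' (-x)) x := fun x => by
      exact ((h2 (-x)).comp x (hasDerivAt_neg x)).congr_deriv (by simp)
    have hM' : ∀ x, |-f''' (-x)| ≤ M := fun x => by rw [abs_neg]; exact hM (-x)
    have := taylor2_nonneg h0' h1' h2' hM' (-a) (h := -h) (by linarith)
    rw [abs_of_neg hh]
    calc |f (a+h) - f a - h * f' a - h^2/2 * f'' a|
        = |f (-(-a + -h)) - f (-(-a)) - (-h) * (-f' (-(-a))) - (-h)^2/2 * f'' (-(-a))| := by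
          ring_nf
      _ ≤ M * (-h)^3 / 6 := this

lemma gauss_exp_deriv (y : ℝ) :
    HasDerivAt (fun y : ℝ => Real.exp (-y^2/2)) (-y * Real.exp (-y^2/2)) y := by
  have h1 : HasDerivAt (fun y : ℝ => -y^2/2) (-y) y := by
    have := ((hasDerivAt_pow 2 y).neg.div_const 2)
    refine this.congr_deriv ?_
    simp; ring
  have := (Real.hasDerivAt_exp (-y^2/2)).comp y h1
  refine this.congr_deriv ?_
  ring

lemma gauss_d0 (c y : ℝ) :
    HasDerivAt (fun y : ℝ => -(c * Real.exp (-y^2/2))) (c * y * Real.exp (-y^2/2)) y := by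
  have := ((gauss_exp_deriv y).const_mul c).neg
  refine this.congr_deriv ?_
  ring

lemma gauss_d1 (c y : ℝ) :
    HasDerivAt (fun y : ℝ => c * y * Real.exp (-y^2/2))
      (c * (1 - y^2) * Real.exp (-y^2/2)) y := by
  have hid : HasDerivAt (fun y : ℝ => c * y) c y := by
    simpa using (hasDerivAt_id y).const_mul c
  have := hid.mul (gauss_exp_deriv y)
  refine this.congr_deriv ?_
  ring

lemma gauss_d2 (c y : ℝ) :
    HasDerivAt (fun y : ℝ => c * (1 - y^2) * Real.exp (-y^2/2))
      (c * (y^3 - 3*y) * Real.exp (-y^2/2)) y := by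
  have hp : HasDerivAt (fun y : ℝ => c * (1 - y^2)) (c * (-2*y)) y := by
    have := ((hasDerivAt_const y (1:ℝ)).sub (hasDerivAt_pow 2 y)).const_mul c
    refine this.congr_deriv ?_
    simp
  have := hp.mul (gauss_exp_deriv y)
  refine this.congr_deriv ?_
  ring



open MeasureTheory ProbabilityTheory

/-- First derivative of the Gaussian tail: `Ψ'(x) = -(2π)^{-1/2} e^{-x²/2}`. -/
noncomputable def PsiD1 (x : ℝ) : ℝ :=
  -((Real.sqrt (2 * Real.pi))⁻¹ * Real.exp (-x ^ 2 / 2))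

/-- Second-order expansion of `E[Ψ'((u − εX)/σ)]`, where
`Ψ'''(x) = (2π)^{-1/2}(1 − x²)e^{-x²/2}`. -/
theorem mean_gaussian_tail_deriv_expansion
    {Ω : Type*} [MeasurableSpace Ω] (P : Measure Ω) [IsProbabilityMeasure P]
    (X : Ω → ℝ) (hX_meas : Measurable X)
    (hX_mean : ∫ ω, X ω ∂P = 0)
    (hX3 : Integrable (fun ω => |X ω| ^ 3) P)
    (σ : ℝ) (hσ : 0 < σ) (ε : ℝ) (hε : 0 < ε) (u : ℝ) :
    |(∫ ω, PsiD1 ((u - ε * X ω) / σ) ∂P) - PsiD1 (u / σ)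
        - ε ^ 2 * (∫ ω, (X ω) ^ 2 ∂P) / (2 * σ ^ 2) *
            ((Real.sqrt (2 * Real.pi))⁻¹ * (1 - (u / σ) ^ 2) *
              Real.exp (-u ^ 2 / (2 * σ ^ 2)))|
      ≤ ε ^ 3 * (∫ ω, |X ω| ^ 3 ∂P) / (2 * σ ^ 3 * Real.sqrt (2 * Real.pi)) := by
  set c : ℝ := (Real.sqrt (2 * Real.pi))⁻¹ with hc
  have hπ : (0:ℝ) < Real.sqrt (2 * Real.pi) := Real.sqrt_pos.2 (by positivity)
  have hcpos : 0 < c := inv_pos.2 hπ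
  set f : ℝ → ℝ := fun y => -(c * Real.exp (-y^2/2)) with hfdef
  set f1 : ℝ → ℝ := fun y => c * y * Real.exp (-y^2/2) with hf1def
  set f2 : ℝ → ℝ := fun y => c * (1 - y^2) * Real.exp (-y^2/2) with hf2def
  set f3 : ℝ → ℝ := fun y => c * (y^3 - 3*y) * Real.exp (-y^2/2) with hf3def
  have hM : ∀ y, |f3 y| ≤ 3 * c := by
    intro y
    have h1 := cubic_gauss_bound y
    have : |f3 y| = c * (|y^3 - 3*y| * Real.exp (-y^2/2)) := by
      rw [hf3def]
      simp only []
      rw [abs_mul, abs_mul, abs_of_pos hcpos, abs_of_pos (Real.exp_pos _), mul_assoc]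
    rw [this]
    calc c * (|y^3 - 3*y| * Real.exp (-y^2/2)) ≤ c * 3 := by
          exact mul_le_mul_of_nonneg_left h1 hcpos.le
      _ = 3 * c := by ring
  set a : ℝ := u / σ with hadef
  set h : Ω → ℝ := fun ω => -(ε * X ω) / σ with hhdef
  -- pointwise Taylor bound
  have key : ∀ ω, |f (a + h ω) - f a - h ω * f1 a - (h ω)^2/2 * f2 a|
      ≤ 3 * c * |h ω|^3 / 6 :=
    fun ω => taylor2_bound (gauss_d0 c) (gauss_d1 c) (gauss_d2 c) hM a (h ω)
  have hsum : ∀ ω, (u - ε * X ω) / σ = a + h ω := by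
    intro ω; rw [hadef, hhdef]; ring
  -- integrability facts
  have habs1 : ∀ t : ℝ, 0 ≤ t → t ≤ 1 + t^3 := by
    intro t ht; nlinarith [sq_nonneg (t-1), sq_nonneg (t+1), sq_nonneg t]
  have habs2 : ∀ t : ℝ, 0 ≤ t → t^2 ≤ 1 + t^3 := by
    intro t ht; nlinarith [sq_nonneg (t-1), sq_nonneg t]
  have hX1 : Integrable X P := by
    refine ((integrable_const (1:ℝ)).add hX3).mono' hX_meas.aestronglyMeasurable ?_
    filter_upwards with ω
    simp only [Real.norm_eq_abs, Pi.add_apply]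
    exact habs1 _ (abs_nonneg _)
  have hX2 : Integrable (fun ω => X ω ^ 2) P := by
    refine ((integrable_const (1:ℝ)).add hX3).mono'
      ((hX_meas.pow_const 2).aestronglyMeasurable) ?_
    filter_upwards with ω
    simp only [Real.norm_eq_abs, Pi.add_apply, abs_pow, sq_abs]
    rw [← sq_abs]
    exact habs2 _ (abs_nonneg _)
  have hIf : Integrable (fun ω => f (a + h ω)) P := by
    refine (integrable_const c).mono' ?_ ?_
    · have hcont : Continuous f := by
        rw [hfdef]; continuity
      have hmeas : Measurable fun ω => a + h ω := by
        rw [hhdef]; exact measurable_const.add (((hX_meas.const_mul ε).neg).div_const σ)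
      exact (hcont.measurable.comp hmeas).aestronglyMeasurable
    · filter_upwards with ω
      rw [hfdef]
      simp only [Real.norm_eq_abs, abs_neg, abs_mul, abs_of_pos hcpos,
        abs_of_pos (Real.exp_pos _)]
      nth_rewrite 2 [← mul_one c]
      refine mul_le_mul_of_nonneg_left ?_ hcpos.le
      exact Real.exp_le_one_iff.2 (by nlinarith [sq_nonneg (a + h ω)])
  have hhX : ∀ ω, h ω = (-ε/σ) * X ω := fun ω => by rw [hhdef]; ring
  have hIh : Integrable h P := by
    have : h = fun ω => (-ε/σ) * X ω := funext hhX
    rw [this]; exact hX1.const_mul _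
  have hIh2 : Integrable (fun ω => (h ω)^2) P := by
    have : (fun ω => (h ω)^2) = fun ω => (-ε/σ)^2 * X ω ^ 2 := by
      funext ω; rw [hhX ω]; ring
    rw [this]; exact hX2.const_mul _
  have hInth : ∫ ω, h ω ∂P = 0 := by
    have : ∫ ω, h ω ∂P = ∫ ω, (-ε/σ) * X ω ∂P := by congr 1; exact funext hhX
    rw [this, integral_const_mul, hX_mean, mul_zero]
  have hInth2 : ∫ ω, (h ω)^2 ∂P = (ε/σ)^2 * ∫ ω, X ω ^ 2 ∂P := by
    have : ∫ ω, (h ω)^2 ∂P = ∫ ω, (ε/σ)^2 * X ω ^ 2 ∂P := by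
      congr 1; funext ω; rw [hhX ω]; ring
    rw [this, integral_const_mul]
  -- the remainder function
  set r : Ω → ℝ := fun ω => f (a + h ω) - f a - h ω * f1 a - (h ω)^2/2 * f2 a with hrdef
  have hIr : Integrable r P := by
    refine ((hIf.sub (integrable_const (f a))).sub (hIh.mul_const (f1 a))).sub ?_
    have : (fun ω => (h ω)^2/2 * f2 a) = fun ω => (h ω)^2 * (f2 a / 2) := by
      funext ω; ring
    rw [this]; exact hIh2.mul_const _
  have i3 : Integrable (fun ω => (h ω)^2/2 * f2 a) P := by
    have : (fun ω => (h ω)^2/2 * f2 a) = fun ω => (h ω)^2 * (f2 a / 2) := by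
      funext ω; ring
    rw [this]; exact hIh2.mul_const _
  have i2 : Integrable (fun ω => h ω * f1 a) P := hIh.mul_const _
  have i1 : Integrable (fun ω => f (a + h ω) - f a) P := hIf.sub (integrable_const _)
  have i12 : Integrable (fun ω => f (a + h ω) - f a - h ω * f1 a) P := i1.sub i2
  have e1 : ∫ _ω : Ω, f a ∂P = f a := by simp
  have e2 : ∫ ω, h ω * f1 a ∂P = 0 := by rw [integral_mul_const, hInth, zero_mul]
  have e3 : ∫ ω, (h ω)^2/2 * f2 a ∂P = (ε/σ)^2 * (∫ ω, X ω ^ 2 ∂P) / 2 * f2 a := by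
    have : (fun ω => (h ω)^2/2 * f2 a) = fun ω => (h ω)^2 * (f2 a / 2) := by
      funext ω; ring
    rw [this, integral_mul_const, hInth2]; ring
  have hIntr : ∫ ω, r ω ∂P
      = (∫ ω, f (a + h ω) ∂P) - f a - (ε/σ)^2 * (∫ ω, X ω ^ 2 ∂P) / 2 * f2 a := by
    calc ∫ ω, r ω ∂P
        = (∫ ω, (f (a + h ω) - f a - h ω * f1 a) ∂P) - ∫ ω, (h ω)^2/2 * f2 a ∂P :=
          integral_sub i12 i3
      _ = ((∫ ω, (f (a + h ω) - f a) ∂P) - ∫ ω, h ω * f1 a ∂P) - ∫ ω, (h ω)^2/2 * f2 a ∂P := by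
          rw [integral_sub i1 i2]
      _ = (((∫ ω, f (a + h ω) ∂P) - ∫ _ω : Ω, f a ∂P) - ∫ ω, h ω * f1 a ∂P)
            - ∫ ω, (h ω)^2/2 * f2 a ∂P := by
          rw [integral_sub hIf (integrable_const _)]
      _ = (∫ ω, f (a + h ω) ∂P) - f a - (ε/σ)^2 * (∫ ω, X ω ^ 2 ∂P) / 2 * f2 a := by
          rw [e1, e2, e3]; ring
  -- identify the goal's expression with ∫ r
  have hexp : -u ^ 2 / (2 * σ ^ 2) = -a^2/2 := by
    rw [hadef]; ring
  have hgoal_eq :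
      (∫ ω, PsiD1 ((u - ε * X ω) / σ) ∂P) - PsiD1 a
        - ε ^ 2 * (∫ ω, (X ω) ^ 2 ∂P) / (2 * σ ^ 2) *
            (c * (1 - a ^ 2) * Real.exp (-u ^ 2 / (2 * σ ^ 2)))
      = ∫ ω, r ω ∂P := by
    rw [hIntr]
    have h1 : ∀ ω, PsiD1 ((u - ε * X ω) / σ) = f (a + h ω) := by
      intro ω; rw [← hsum ω]; simp [PsiD1, hfdef, hc]
    have h2 : PsiD1 a = f a := by simp [PsiD1, hfdef, hc]
    have h3 : ∫ ω, PsiD1 ((u - ε * X ω) / σ) ∂P = ∫ ω, f (a + h ω) ∂P := by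
      congr 1; exact funext h1
    rw [h3, h2, hexp]
    have h4 : f2 a = c * (1 - a ^ 2) * Real.exp (-a^2/2) := rfl
    rw [← h4]
    have hscal : ε ^ 2 * (∫ ω, (X ω) ^ 2 ∂P) / (2 * σ ^ 2)
        = (ε/σ)^2 * (∫ ω, X ω ^ 2 ∂P) / 2 := by
      ring
    rw [hscal]
  rw [hgoal_eq]
  -- bound the integral
  have hb : ∀ ω, |r ω| ≤ c / 2 * (ε/σ)^3 * |X ω|^3 := by
    intro ω
    refine (key ω).trans_eq ?_
    have : |h ω| = (ε/σ) * |X ω| := by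
      rw [hhX ω, abs_mul, abs_div, abs_neg, abs_of_pos hε, abs_of_pos hσ]
    rw [this]; ring
  calc |∫ ω, r ω ∂P| ≤ ∫ ω, |r ω| ∂P := by
        have := norm_integral_le_integral_norm (μ := P) r
        simp only [Real.norm_eq_abs] at this
        exact this
    _ ≤ ∫ ω, c / 2 * (ε/σ)^3 * |X ω|^3 ∂P := by
        refine integral_mono hIr.abs (hX3.const_mul _) ?_
        intro ω; exact hb ω
    _ = ε ^ 3 * (∫ ω, |X ω| ^ 3 ∂P) / (2 * σ ^ 3 * Real.sqrt (2 * Real.pi)) := by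
        rw [integral_const_mul, hc]
        ring
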